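/- arXiv:2603.23732 — 5 statements merged into one kernel-verified Lean document; each statement's English description precedes it below -/
import Mathlib

section
/- If vector-valued functions a, b : Ω → ℂ² are vector symmetry-adapted polynomials with distinct modes m ≠ n, and W : Ω → ℂ^{2×2} is an equivariant matrix weight, then ∬_Ω a(x)* W(x) b(x) dx = 0. -/
open Matrix MeasureTheory

noncomputable def rot (φ : ℝ) : Matrix (Fin 2) (Fin 2) ℝ :=
  !![Real.cos φ, -Real.sin φ; Real.sin φ, Real.cos φ]

noncomputable def rotC (φ : ℝ) : Matrix (Fin 2) (Fin 2) ℂ := (rot φ).map Complex.ofReal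

noncomputable def evalR (p : MvPolynomial (Fin 2) ℂ) (x : Fin 2 → ℝ) : ℂ :=
  MvPolynomial.eval (fun i => (x i : ℂ)) p

lemma det_rot (φ : ℝ) : (rot φ).det = 1 := by
  simp [rot, Matrix.det_fin_two_of]
  nlinarith [Real.sin_sq_add_cos_sq φ]

lemma rot_inv_mul (φ : ℝ) : rot (-φ) * rot φ = 1 := by
  ext i j
  fin_cases i <;> fin_cases j <;>
    simp [rot, Matrix.mul_apply, Fin.sum_univ_two, Real.cos_neg, Real.sin_neg] <;>
    nlinarith [Real.sin_sq_add_cos_sq φ]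

lemma rot_inv_mulVec (φ : ℝ) (x : Fin 2 → ℝ) : rot (-φ) *ᵥ (rot φ *ᵥ x) = x := by
  rw [Matrix.mulVec_mulVec, rot_inv_mul, Matrix.one_mulVec]

lemma rotC_unitary (φ : ℝ) : (rotC φ)ᴴ * rotC φ = 1 := by
  ext i j
  fin_cases i <;> fin_cases j <;>
    simp [rotC, rot, Matrix.mul_apply, Fin.sum_univ_two, Matrix.conjTranspose_apply,
      ← Complex.ofReal_mul, ← Complex.ofReal_add] <;>
    norm_cast <;> nlinarith [Real.sin_sq_add_cos_sq φ]

lemma rot_norm_sq (φ : ℝ) (x : Fin 2 → ℝ) :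
    (rot φ *ᵥ x) 0 ^ 2 + (rot φ *ᵥ x) 1 ^ 2 = x 0 ^ 2 + x 1 ^ 2 := by
  simp [rot, Matrix.mulVec, dotProduct, Fin.sum_univ_two]
  nlinarith [Real.sin_sq_add_cos_sq φ]

lemma measurable_rot_mulVec (φ : ℝ) : Measurable (fun x : Fin 2 → ℝ => rot φ *ᵥ x) := by
  apply measurable_pi_lambda
  intro i
  simp only [Matrix.mulVec, dotProduct]
  exact Finset.measurable_sum _ fun j _ => (measurable_pi_apply j).const_mul _

noncomputable def rotME (φ : ℝ) : (Fin 2 → ℝ) ≃ᵐ (Fin 2 → ℝ) where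
  toFun x := rot φ *ᵥ x
  invFun x := rot (-φ) *ᵥ x
  left_inv x := rot_inv_mulVec φ x
  right_inv x := by
    have := rot_inv_mulVec (-φ) x
    rwa [neg_neg] at this
  measurable_toFun := measurable_rot_mulVec φ
  measurable_invFun := measurable_rot_mulVec (-φ)

lemma measurePreserving_rot (φ : ℝ) :
    MeasurePreserving (fun x : Fin 2 → ℝ => rot φ *ᵥ x) volume volume := by
  refine ⟨measurable_rot_mulVec φ, ?_⟩
  have h : (fun x : Fin 2 → ℝ => rot φ *ᵥ x) = Matrix.toLin' (rot φ) := by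
    ext x i; simp [Matrix.toLin'_apply]
  rw [h, Real.map_matrix_volume_pi_eq_smul_volume_pi (by rw [det_rot]; norm_num), det_rot]
  simp

/-- Vector symmetry-adapted polynomials with distinct modes are orthogonal with respect to
any equivariant matrix weight on the unit disk. -/
theorem vector_symmetry_adapted_orthogonal (m n : ℤ) (hmn : m ≠ n)
    (a b : Fin 2 → MvPolynomial (Fin 2) ℂ)
    (W : (Fin 2 → ℝ) → Matrix (Fin 2) (Fin 2) ℂ)
    (ha : ∀ (φ : ℝ) (x : Fin 2 → ℝ),
      (fun i => evalR (a i) (rot φ *ᵥ x)) =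
        Complex.exp (Complex.I * m * φ) • (rotC φ *ᵥ fun i => evalR (a i) x))
    (hb : ∀ (φ : ℝ) (x : Fin 2 → ℝ),
      (fun i => evalR (b i) (rot φ *ᵥ x)) =
        Complex.exp (Complex.I * n * φ) • (rotC φ *ᵥ fun i => evalR (b i) x))
    (hW : ∀ (φ : ℝ) (x : Fin 2 → ℝ), W (rot φ *ᵥ x) * rotC φ = rotC φ * W x) :
    ∫ x in {x : Fin 2 → ℝ | x 0 ^ 2 + x 1 ^ 2 ≤ 1},
      star (fun i => evalR (a i) x) ⬝ᵥ (W x *ᵥ fun i => evalR (b i) x) = 0 := by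
  set f : (Fin 2 → ℝ) → ℂ :=
    fun x => star (fun i => evalR (a i) x) ⬝ᵥ (W x *ᵥ fun i => evalR (b i) x) with hf
  set S : Set (Fin 2 → ℝ) := {x : Fin 2 → ℝ | x 0 ^ 2 + x 1 ^ 2 ≤ 1} with hS
  -- pointwise identity
  have key : ∀ (φ : ℝ) (x : Fin 2 → ℝ),
      f (rot φ *ᵥ x) = Complex.exp (Complex.I * (n - m) * φ) * f x := by
    intro φ x
    have hconj : (starRingEnd ℂ) (Complex.exp (Complex.I * m * φ)) =
        Complex.exp (-(Complex.I * m * φ)) := by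
      rw [← Complex.exp_conj]
      congr 1
      simp only [_root_.map_mul, Complex.conj_I, Complex.conj_ofReal, map_intCast]
      ring
    calc f (rot φ *ᵥ x)
        = star (fun i => evalR (a i) (rot φ *ᵥ x)) ⬝ᵥ
            (W (rot φ *ᵥ x) *ᵥ fun i => evalR (b i) (rot φ *ᵥ x)) := rfl
      _ = Complex.exp (Complex.I * (n - m) * φ) * f x := by
          rw [ha, hb]
          rw [star_smul, Matrix.mulVec_smul, smul_dotProduct, dotProduct_smul,
            Matrix.mulVec_mulVec, hW, ← Matrix.mulVec_mulVec, Matrix.star_mulVec,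
            ← Matrix.dotProduct_mulVec, Matrix.mulVec_mulVec, rotC_unitary, Matrix.one_mulVec]
          rw [smul_smul, smul_eq_mul, hf]
          congr 1
          rw [Complex.star_def, hconj, ← Complex.exp_add]
          congr 1
          ring
  -- rotation invariance of disk
  have hpre : ∀ φ, (fun x : Fin 2 → ℝ => rot φ *ᵥ x) ⁻¹' S = S := by
    intro φ
    ext x
    simp only [Set.mem_preimage, hS, Set.mem_setOf_eq, rot_norm_sq]
  set φ₀ : ℝ := Real.pi / ((n : ℝ) - m) with hφ₀
  have hnm : (n : ℝ) - m ≠ 0 := by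
    intro h
    apply hmn
    have : (m : ℝ) = n := by linarith
    exact_mod_cast this
  have hstep : ∫ x in S, f x = ∫ x in S, f (rot φ₀ *ᵥ x) := by
    have h := (measurePreserving_rot φ₀).setIntegral_preimage_emb
      (rotME φ₀).measurableEmbedding f S
    rw [hpre] at h
    exact h.symm
  have hexp : Complex.exp (Complex.I * ((n : ℂ) - m) * (φ₀ : ℂ)) = -1 := by
    have hC : ((n : ℂ) - m) ≠ 0 := sub_ne_zero.2 (by exact_mod_cast hmn.symm)
    have : ((n : ℂ) - m) * (φ₀ : ℂ) = (Real.pi : ℂ) := by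
      rw [hφ₀]
      push_cast
      rw [mul_comm, div_mul_cancel₀ _ hC]
    rw [mul_assoc, this, mul_comm, Complex.exp_pi_mul_I]
  have : ∫ x in S, f x = -∫ x in S, f x := by
    calc ∫ x in S, f x = ∫ x in S, f (rot φ₀ *ᵥ x) := hstep
      _ = ∫ x in S, Complex.exp (Complex.I * ((n : ℂ) - m) * (φ₀ : ℂ)) * f x := by
          simp only [key]
      _ = ∫ x in S, (-1 : ℂ) * f x := by rw [hexp]
      _ = -∫ x in S, f x := by rw [integral_const_mul]; ring
  linear_combination this / 2
end

section
/- If p : ℝ² → ℂ² is a vector symmetry-adapted polynomial with mode m, then its transposed Jacobian ∇pᵀ = [[∂_x p₁, ∂_x p₂],[∂_y p₁, ∂_y p₂]] is a matrix symmetry-adapted polynomial with mode m: (∇pᵀ)(ρ(φ)x)·ρ(φ) = ρ(φ)·(∇pᵀ)(x)·e^{imφ}. -/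
open Matrix

/-- The transposed Jacobian `∇pᵀ`, with entry `(i,j)` equal to `∂_i p_j`. -/
noncomputable def jacT (p : (Fin 2 → ℝ) → Fin 2 → ℂ) (x : Fin 2 → ℝ) :
    Matrix (Fin 2) (Fin 2) ℂ :=
  Matrix.of fun i j => fderiv ℝ (fun y => p y j) x (Pi.single i 1)

lemma rotC_mul_transpose (φ : ℝ) : rotC φ * (rotC φ)ᵀ = 1 := by
  ext i j
  fin_cases i <;> fin_cases j <;>
    simp [rotC, rot, Matrix.mul_apply, Fin.sum_univ_two, Matrix.one_apply] <;>
    (ring_nf <;> linear_combination Complex.cos_sq_add_sin_sq (φ:ℂ))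

lemma transpose_mul_rotC (φ : ℝ) : (rotC φ)ᵀ * rotC φ = 1 := by
  ext i j
  fin_cases i <;> fin_cases j <;>
    simp [rotC, rot, Matrix.mul_apply, Fin.sum_univ_two, Matrix.one_apply] <;>
    (ring_nf <;> linear_combination Complex.cos_sq_add_sin_sq (φ:ℂ))

noncomputable def rotCLM (φ : ℝ) : (Fin 2 → ℝ) →L[ℝ] (Fin 2 → ℝ) :=
  LinearMap.toContinuousLinearMap (Matrix.mulVecLin (rot φ))

lemma rotCLM_apply (φ : ℝ) (y : Fin 2 → ℝ) : rotCLM φ y = rot φ *ᵥ y := rfl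

/-- If `p` is vector symmetry-adapted with mode `m` then `∇pᵀ` is matrix symmetry-adapted
with mode `m`: `(∇pᵀ)(ρ(φ)x) ρ(φ) = ρ(φ) (∇pᵀ)(x) e^{imφ}`. -/
theorem jacT_symmetry_adapted (m : ℤ) (p : (Fin 2 → ℝ) → Fin 2 → ℂ) (hp : ContDiff ℝ (⊤ : ℕ∞) p)
    (hsym : ∀ (φ : ℝ) (x : Fin 2 → ℝ),
      p (rot φ *ᵥ x) = Complex.exp (Complex.I * m * φ) • (rotC φ *ᵥ p x))
    (φ : ℝ) (x : Fin 2 → ℝ) :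
    jacT p (rot φ *ᵥ x) * rotC φ =
      Complex.exp (Complex.I * m * φ) • (rotC φ * jacT p x) := by
  set e : ℂ := Complex.exp (Complex.I * m * φ) with he
  set A := rot φ with hA
  have hdiff : ∀ j, Differentiable ℝ (fun y => p y j) := fun j =>
    (contDiff_pi.1 hp j).differentiable (by simp)
  set M := jacT p (A *ᵥ x) with hM
  set N := jacT p x with hN
  have key : ∀ i j, ∑ k, ((A k i : ℂ)) * M k j = e * ∑ k, rotC φ j k * N i k := by
    intro i j
    have h1 : HasFDerivAt (fun y => p (A *ᵥ y) j)
        ((fderiv ℝ (fun y => p y j) (A *ᵥ x)).comp (rotCLM φ)) x := by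
      have hc := ((hdiff j (A *ᵥ x)).hasFDerivAt).comp x ((rotCLM φ).hasFDerivAt)
      exact hc
    have h2 : HasFDerivAt (fun y => e * ∑ k, rotC φ j k * p y k)
        (e • ∑ k, rotC φ j k • fderiv ℝ (fun y => p y k) x) x := by
      apply HasFDerivAt.const_mul
      apply HasFDerivAt.fun_sum
      intro k _
      exact ((hdiff k x).hasFDerivAt).const_mul _
    have hfun : (fun y => p (A *ᵥ y) j) = fun y => e * ∑ k, rotC φ j k * p y k := by
      funext y
      rw [hA, hsym φ y]
      simp [Matrix.mulVec, dotProduct]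
      fin_cases j <;> simp [he]
    rw [hfun] at h1
    have hEq := h1.unique h2
    have hv := DFunLike.congr_fun hEq (Pi.single i (1:ℝ))
    have hAi : rotCLM φ (Pi.single i (1:ℝ)) = ∑ k, A k i • (Pi.single k 1 : Fin 2 → ℝ) := by
      funext l
      simp [rotCLM_apply, hA, Matrix.mulVec_single, Finset.sum_apply, Pi.single_apply,
        mul_comm]
    simp only [ContinuousLinearMap.comp_apply, hAi, map_sum, _root_.map_smul] at hv
    simp only [ContinuousLinearMap.smul_apply, ContinuousLinearMap.sum_apply,
      Finset.mul_sum, smul_eq_mul] at hv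
    calc ∑ k, ((A k i : ℂ)) * M k j
        = ∑ k, A k i • fderiv ℝ (fun y => p y j) (A *ᵥ x) (Pi.single k 1) := by
          apply Finset.sum_congr rfl; intro k _
          simp [hM, jacT, Complex.real_smul]
      _ = e * ∑ k, rotC φ j k * N i k := by
          rw [hv, Finset.mul_sum]
          exact Finset.sum_congr rfl fun k _ => by simp [hN, jacT, mul_assoc]
  have hm : (rotC φ)ᵀ * M = e • (N * (rotC φ)ᵀ) := by
    ext i j
    simp only [Matrix.mul_apply, Matrix.transpose_apply, Matrix.smul_apply, smul_eq_mul]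
    have := key i j
    calc ∑ k, rotC φ k i * M k j = ∑ k, ((A k i : ℂ)) * M k j := by
          apply Finset.sum_congr rfl; intro k _; simp [rotC, hA]
      _ = e * ∑ k, rotC φ j k * N i k := this
      _ = e * ∑ k, N i k * rotC φ j k := by rw [Finset.sum_congr rfl]; intro k _; ring
  calc M * rotC φ = (rotC φ * (rotC φ)ᵀ) * M * rotC φ := by
        rw [rotC_mul_transpose, one_mul]
    _ = rotC φ * (((rotC φ)ᵀ * M) * rotC φ) := by
        simp only [Matrix.mul_assoc]
    _ = rotC φ * ((e • (N * (rotC φ)ᵀ)) * rotC φ) := by rw [hm]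
    _ = e • (rotC φ * (N * ((rotC φ)ᵀ * rotC φ))) := by
        simp [Matrix.mul_smul, Matrix.smul_mul, Matrix.mul_assoc]
    _ = e • (rotC φ * N) := by rw [transpose_mul_rotC, Matrix.mul_one]
end

section
/- If a and b are vector symmetry-adapted polynomials on the disk with the same mode m, and on the positive x-axis a(r,0) = f(r)(1, εi)ᵀ and b(r,0) = g(r)(1, εi)ᵀ for some scalar functions f, g and a common sign ε ∈ {+1,−1}, then ∬_Ω a(x)* Σ(x) b(x) w(r) dx = 0 for any radial weight w, where Σ(x,y) = [[x²−y², 2xy],[2xy, y²−x²]]. -/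
open Matrix MeasureTheory

def Sig (x : Fin 2 → ℝ) : Matrix (Fin 2) (Fin 2) ℝ :=
  !![x 0 ^ 2 - x 1 ^ 2, 2 * x 0 * x 1; 2 * x 0 * x 1, x 1 ^ 2 - x 0 ^ 2]

noncomputable def SigC (x : Fin 2 → ℝ) : Matrix (Fin 2) (Fin 2) ℂ := (Sig x).map Complex.ofReal

/-! `Σ(x) = 2xxᵀ - |x|²I` is rotation-equivariant: `ρ(φ)ᵀ Σ(ρ(φ)y) ρ(φ) = Σ(y)`. Writing
`x = ρ(φ)(r, 0)`, symmetry adaptation gives `a(x) = e^{imφ} f(r) ρ(φ)v` and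
`b(x) = e^{imφ} g(r) ρ(φ)v` with `v = (1, εi)`, hence
`a(x)* Σ(x) b(x) = r² conj(f r) g(r) · v* diag(1, -1) v = r² conj(f r) g(r) (1 - ε²) = 0`.
The integrand vanishes pointwise. -/

theorem rot_transpose_mul_Sig_mul_rot (φ : ℝ) (y : Fin 2 → ℝ) :
    (rot φ)ᵀ * Sig (rot φ *ᵥ y) * rot φ = Sig y := by
  have homogeneous : ∀ i j, ((rot φ)ᵀ * Sig (rot φ *ᵥ y) * rot φ) i j =
      (Real.sin φ ^ 2 + Real.cos φ ^ 2) ^ 2 * Sig y i j := by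
    intro i j
    fin_cases i <;> fin_cases j <;>
      simp only [rot, Sig, mulVec, dotProduct, of_apply, cons_val', cons_val_fin_one,
        cons_val_zero, cons_val_one, Fin.sum_univ_two, Fin.zero_eta, Fin.mk_one, Matrix.mul_apply,
        transpose_apply] <;> ring
  ext i j
  rw [homogeneous, Real.sin_sq_add_cos_sq, one_pow, one_mul]

theorem conjTranspose_rotC (φ : ℝ) : (rotC φ)ᴴ = (rot φ)ᵀ.map Complex.ofReal := by
  rw [rotC, ← conjTranspose_map _ fun r => (Complex.conj_ofReal r).symm,
    conjTranspose_eq_transpose_of_trivial]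

theorem star_rotC_mulVec_dotProduct_SigC (φ : ℝ) (y : Fin 2 → ℝ) (u v : Fin 2 → ℂ) :
    star (rotC φ *ᵥ u) ⬝ᵥ (SigC (rot φ *ᵥ y) *ᵥ (rotC φ *ᵥ v)) = star u ⬝ᵥ (SigC y *ᵥ v) := by
  have map_ofReal_mul (A B : Matrix (Fin 2) (Fin 2) ℝ) :
      A.map Complex.ofReal * B.map Complex.ofReal = (A * B).map Complex.ofReal :=
    (Matrix.map_mul (f := Complex.ofRealHom)).symm
  rw [star_mulVec, mulVec_mulVec, dotProduct_mulVec, vecMul_vecMul, conjTranspose_rotC, SigC,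
    rotC, map_ofReal_mul, map_ofReal_mul, ← Matrix.mul_assoc, rot_transpose_mul_Sig_mul_rot, ← SigC,
    ← dotProduct_mulVec]

theorem exists_eq_rot_mulVec (x : Fin 2 → ℝ) : ∃ r φ : ℝ, x = rot φ *ᵥ ![r, 0] := by
  set z : ℂ := ⟨x 0, x 1⟩
  refine ⟨‖z‖, z.arg, funext fun i => ?_⟩
  fin_cases i
  · simp [rot, mulVec, dotProduct, Complex.norm_mul_cos_arg, mul_comm, z]
  · simp [rot, mulVec, dotProduct, Complex.norm_mul_sin_arg, mul_comm, z]

theorem star_dotProduct_SigC_axis_eq_zero {ε : ℝ} (hε : ε ^ 2 = 1) (r : ℝ) (p q : ℂ) :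
    star ![p, ε * Complex.I * p] ⬝ᵥ (SigC ![r, 0] *ᵥ ![q, ε * Complex.I * q]) = 0 := by
  have hεC : (ε : ℂ) ^ 2 = 1 := by exact_mod_cast hε
  simp only [dotProduct, mulVec, SigC, Sig, Pi.star_apply, RCLike.star_def, map_apply, of_apply,
    cons_val', cons_val_zero, cons_val_one, cons_val_fin_one, Fin.sum_univ_two, Complex.ofReal_pow,
    Complex.ofReal_sub, Complex.ofReal_mul, Complex.ofReal_zero, map_mul, Complex.conj_ofReal,
    Complex.conj_I]
  linear_combination (starRingEnd ℂ p * r ^ 2 * q * ε ^ 2) * Complex.I_sq -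
    (starRingEnd ℂ p * r ^ 2 * q) * hεC

def IsSymmetryAdapted (m : ℤ) (F : (Fin 2 → ℝ) → Fin 2 → ℂ) : Prop :=
  ∀ (φ : ℝ) (x : Fin 2 → ℝ), F (rot φ *ᵥ x) = Complex.exp (Complex.I * m * φ) • (rotC φ *ᵥ F x)

theorem IsSymmetryAdapted.star_dotProduct_SigC_mulVec_eq_zero {m n : ℤ}
    {F G : (Fin 2 → ℝ) → Fin 2 → ℂ} (hF : IsSymmetryAdapted m F) (hG : IsSymmetryAdapted n G)
    {ε : ℝ} (hε : ε ^ 2 = 1) {f g : ℝ → ℂ} (hFaxis : ∀ r, F ![r, 0] = ![f r, ε * Complex.I * f r])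
    (hGaxis : ∀ r, G ![r, 0] = ![g r, ε * Complex.I * g r]) (x : Fin 2 → ℝ) :
    star (F x) ⬝ᵥ (SigC x *ᵥ G x) = 0 := by
  obtain ⟨r, φ, rfl⟩ := exists_eq_rot_mulVec x
  rw [hF, hG, hFaxis, hGaxis, star_smul, smul_dotProduct, mulVec_smul, dotProduct_smul,
    star_rotC_mulVec_dotProduct_SigC, star_dotProduct_SigC_axis_eq_zero hε, smul_zero,
    smul_zero]

/-- Two vector symmetry-adapted polynomials with the same mode `m`, whose values on the
positive `x`-axis are proportional to `(1, εi)ᵀ` for a common sign `ε`, are orthogonal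
with respect to the matrix `Σ` and any radial weight. -/
theorem Sig_orthogonality (m : ℤ) (ε : ℝ) (hε : ε = 1 ∨ ε = -1)
    (a b : Fin 2 → MvPolynomial (Fin 2) ℂ) (f g : ℝ → ℂ) (w : ℝ → ℝ)
    (ha : ∀ (φ : ℝ) (x : Fin 2 → ℝ),
      (fun i => evalR (a i) (rot φ *ᵥ x)) =
        Complex.exp (Complex.I * m * φ) • (rotC φ *ᵥ fun i => evalR (a i) x))
    (hb : ∀ (φ : ℝ) (x : Fin 2 → ℝ),
      (fun i => evalR (b i) (rot φ *ᵥ x)) =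
        Complex.exp (Complex.I * m * φ) • (rotC φ *ᵥ fun i => evalR (b i) x))
    (haxis : ∀ r : ℝ, (fun i => evalR (a i) ![r, 0]) = ![f r, (ε : ℂ) * Complex.I * f r])
    (hbaxis : ∀ r : ℝ, (fun i => evalR (b i) ![r, 0]) = ![g r, (ε : ℂ) * Complex.I * g r]) :
    ∫ x in {x : Fin 2 → ℝ | x 0 ^ 2 + x 1 ^ 2 ≤ 1},
      (star (fun i => evalR (a i) x) ⬝ᵥ (SigC x *ᵥ fun i => evalR (b i) x)) *
        (w (Real.sqrt (x 0 ^ 2 + x 1 ^ 2)) : ℂ) = 0 := by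
  have hε2 : ε ^ 2 = 1 := by rcases hε with rfl | rfl <;> norm_num
  have vanishes (x : Fin 2 → ℝ) :
      star (fun i => evalR (a i) x) ⬝ᵥ (SigC x *ᵥ fun i => evalR (b i) x) = 0 :=
    IsSymmetryAdapted.star_dotProduct_SigC_mulVec_eq_zero (F := fun x i => evalR (a i) x)
      (G := fun x i => evalR (b i) x) ha hb hε2 haxis hbaxis x
  simp only [vanishes, zero_mul, integral_zero]
end

section
/- The space N of polynomial vector fields on ℝ² that are tangentially-vanishing on the unit circle (i.e. p(x,y)ᵀ(−y,x)ᵀ = 0 whenever x²+y² = 1) equals {N(x,y)·q(x,y) : q ∈ ℝ[x,y]²}, where N(x,y) = [[1−y², xy],[xy, 1−x²]]. -/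
open MvPolynomial

/-!
Write `J = (-y, x)` for the tangent field of the circle and `r² = x² + y²`. Then
`N = I - J Jᵀ`, so `N J = (1 - r²) J`; over any commutative ring this shows that `p` lies in the
image of `N` exactly when `x² + y² - 1` divides `Jᵀ p = -y p₀ + x p₁`. Over `ℝ[x, y]`, that
divisibility is equivalent to `Jᵀ p` vanishing on the unit circle: divide by the monic
`x² + (y² - 1)` in `ℝ[y][x]`; the remainder is affine in `x` and vanishes at both points
`(±√(1 - y²), y)` for every `|y| < 1`, so it is zero.
-/

/-- If `Jᵀ p = (r² - 1) h`, then `N (p - h J) = p - (Jᵀ p) J - (1 - r²) h J = p`. -/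
theorem exists_N_mul_eq_iff_dvd {R : Type*} [CommRing R] (x y : R) (p : Fin 2 → R) :
    (∃ q : Fin 2 → R,
        p 0 = (1 - y ^ 2) * q 0 + x * y * q 1 ∧ p 1 = x * y * q 0 + (1 - x ^ 2) * q 1) ↔
      x ^ 2 + y ^ 2 - 1 ∣ -y * p 0 + x * p 1 := by
  constructor
  · rintro ⟨q, hq₀, hq₁⟩
    exact ⟨y * q 0 - x * q 1, by rw [hq₀, hq₁]; ring⟩
  · rintro ⟨h, hh⟩
    refine ⟨![p 0 + y * h, p 1 - x * h], ?_, ?_⟩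
    · simp only [Matrix.cons_val_zero, Matrix.cons_val_one]
      linear_combination -y * hh
    · simp only [Matrix.cons_val_zero, Matrix.cons_val_one]
      linear_combination x * hh

theorem eq_zero_of_natDegree_lt_two_of_eval_circle {r : Polynomial (MvPolynomial (Fin 1) ℝ)}
    (hr : r.natDegree < 2)
    (h : ∀ x y : ℝ, x ^ 2 + y ^ 2 = 1 → (r.map (eval ![y])).eval x = 0) : r = 0 := by
  ext i : 1
  rw [Polynomial.coeff_zero]
  refine funext_set (fun _ ↦ Set.Ioo (-1) 1) (fun _ ↦ Set.Ioo_infinite (by norm_num))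
    fun t ht ↦ ?_
  obtain ⟨ht₁, ht₂⟩ := ht 0 trivial
  set s := √(1 - t 0 ^ 2)
  have hs : 0 < s := Real.sqrt_pos.mpr (by nlinarith)
  have hs₂ : s ^ 2 + t 0 ^ 2 = 1 := by rw [Real.sq_sqrt (by nlinarith)]; ring
  have ht : t = ![t 0] := by ext j; fin_cases j; rfl
  have hmap : r.map (eval t) = 0 := by
    refine Polynomial.eq_zero_of_natDegree_lt_card_of_eval_eq_zero' _ {s, -s} ?_ ?_
    · rintro x hx
      rw [ht]
      simp only [Finset.mem_insert, Finset.mem_singleton] at hx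
      rcases hx with rfl | rfl
      · exact h _ _ hs₂
      · exact h _ _ (by rwa [neg_sq])
    · rw [Finset.card_pair (by linarith)]
      exact Polynomial.natDegree_map_le.trans_lt hr
  simpa using congrArg (Polynomial.coeff · i) hmap

theorem finSuccEquiv_circle :
    finSuccEquiv ℝ 1 (X 0 ^ 2 + X 1 ^ 2 - 1) = Polynomial.X ^ 2 + Polynomial.C (X 0 ^ 2 - 1) := by
  rw [show (1 : Fin 2) = (0 : Fin 1).succ from rfl]
  simp only [map_sub, map_add, map_pow, map_one, finSuccEquiv_X_zero, finSuccEquiv_X_succ]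
  ring

theorem X_sq_add_X_sq_sub_one_dvd_iff (f : MvPolynomial (Fin 2) ℝ) :
    X 0 ^ 2 + X 1 ^ 2 - 1 ∣ f ↔ ∀ x y : ℝ, x ^ 2 + y ^ 2 = 1 → eval ![x, y] f = 0 := by
  constructor
  · rintro ⟨g, rfl⟩ x y hxy
    simp [hxy]
  · intro hf
    set d : Polynomial (MvPolynomial (Fin 1) ℝ) := Polynomial.X ^ 2 + Polynomial.C (X 0 ^ 2 - 1)
    have hd : d.natDegree = 2 := Polynomial.natDegree_X_pow_add_C
    have hmonic : d.Monic := Polynomial.monic_X_pow_add_C _ two_ne_zero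
    rw [← map_dvd_iff (finSuccEquiv ℝ 1), finSuccEquiv_circle,
      ← Polynomial.modByMonic_eq_zero_iff_dvd hmonic]
    refine eq_zero_of_natDegree_lt_two_of_eval_circle ?_ fun x y hxy ↦ ?_
    · refine hd ▸ Polynomial.natDegree_modByMonic_lt _ hmonic fun h ↦ ?_
      rw [h, Polynomial.natDegree_one] at hd
      exact two_ne_zero hd.symm
    · have hd_eval : (d.map (eval ![y])).eval x = 0 := by
        simp [d]
        linear_combination hxy
      rw [Polynomial.modByMonic_eq_sub_mul_div, Polynomial.map_sub, Polynomial.eval_sub,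
        Polynomial.map_mul, Polynomial.eval_mul, hd_eval, zero_mul, sub_zero,
        ← eval_eq_eval_mv_eval']
      exact hf x y hxy

/-- The space of polynomial vector fields normal on the unit circle equals
`{N(x,y) q : q ∈ ℝ[x,y]²}` where `N(x,y) = [[1−y², xy],[xy, 1−x²]]`. -/
theorem normal_polynomials_eq_N_module :
    {p : Fin 2 → MvPolynomial (Fin 2) ℝ |
      ∀ x y : ℝ, x ^ 2 + y ^ 2 = 1 →
        -y * eval ![x, y] (p 0) + x * eval ![x, y] (p 1) = 0} =
    {p : Fin 2 → MvPolynomial (Fin 2) ℝ |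
      ∃ q : Fin 2 → MvPolynomial (Fin 2) ℝ,
        p 0 = (1 - X 1 ^ 2) * q 0 + X 0 * X 1 * q 1 ∧
        p 1 = X 0 * X 1 * q 0 + (1 - X 0 ^ 2) * q 1} := by
  ext p
  rw [Set.mem_ofPred_eq, Set.mem_ofPred_eq, exists_N_mul_eq_iff_dvd, X_sq_add_X_sq_sub_one_dvd_iff]
  simp
end

section
/- For the map P_m f(x) := r^{|m|−1} e^{imθ} ρ(θ) (1, i·sign m)ᵀ f(r²) with m ≠ 0, the intertwining relations hold: P_m(t·f) = r²·P_m f, and P_m(t·S·f) = Σ·P_m f, where S = diag(1,−1), Σ(x,y) = [[x²−y², 2xy],[2xy, y²−x²]], and f : [0,1] → ℂ² is any polynomial vector. -/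
open Matrix

noncomputable def zsign (m : ℤ) : ℂ := if 0 ≤ m then 1 else -1

/-- The map `𝒫_m f(x) = r^{|m|−1} e^{imθ} ρ(θ) ((1, i sign m)ᵀ ⊙ f(r²))` evaluated in
polar coordinates. -/
noncomputable def Pmap (m : ℤ) (f : ℝ → Fin 2 → ℂ) (r θ : ℝ) : Fin 2 → ℂ :=
  ((r : ℂ) ^ (m.natAbs - 1) * Complex.exp (Complex.I * m * θ)) •
    (rotC θ *ᵥ (Matrix.diagonal ![1, Complex.I * zsign m] *ᵥ f (r ^ 2)))

/-- The intertwining relations `𝒫_m(t f) = r² 𝒫_m f` and `𝒫_m(t S f) = Σ 𝒫_m f`. -/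
theorem Pmap_intertwine (m : ℤ) (hm : m ≠ 0) (f : ℝ → Fin 2 → ℂ) (r θ : ℝ) :
    Pmap m (fun t => (t : ℂ) • f t) r θ = ((r : ℂ) ^ 2) • Pmap m f r θ ∧
    Pmap m (fun t => (t : ℂ) • (Matrix.diagonal ![1, -1] *ᵥ f t)) r θ =
      SigC ![r * Real.cos θ, r * Real.sin θ] *ᵥ Pmap m f r θ := by
  have hcs : Complex.sin θ ^ 2 + Complex.cos θ ^ 2 = 1 := Complex.sin_sq_add_cos_sq θ
  have key : SigC ![r * Real.cos θ, r * Real.sin θ] * rotC θ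
      = ((r:ℂ)^2) • (rotC θ * (Matrix.diagonal ![1,-1] : Matrix (Fin 2) (Fin 2) ℂ)) := by
    ext i j
    fin_cases i <;> fin_cases j <;>
      simp [SigC, Sig, rotC, rot, Matrix.mul_apply, Fin.sum_univ_two, Matrix.diagonal] <;>
      push_cast <;>
      [ linear_combination ((r:ℂ)^2 * Complex.cos θ) * hcs;
        linear_combination ((r:ℂ)^2 * Complex.sin θ) * hcs;
        linear_combination ((r:ℂ)^2 * Complex.sin θ) * hcs;
        linear_combination (-(r:ℂ)^2 * Complex.cos θ) * hcs ]
  have hDS : (Matrix.diagonal ![1, Complex.I * zsign m] : Matrix (Fin 2) (Fin 2) ℂ) *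
        Matrix.diagonal ![1,-1]
      = Matrix.diagonal ![1,-1] * Matrix.diagonal ![1, Complex.I * zsign m] := by
    ext i j
    fin_cases i <;> fin_cases j <;>
      simp [Matrix.mul_apply, Fin.sum_univ_two, Matrix.diagonal] <;> ring
  constructor
  · simp only [Pmap]
    push_cast
    rw [Matrix.mulVec_smul, Matrix.mulVec_smul, smul_comm]
  · simp only [Pmap]
    push_cast
    rw [Matrix.mulVec_smul, Matrix.mulVec_smul, Matrix.mulVec_smul,
      Matrix.mulVec_mulVec, Matrix.mulVec_mulVec, Matrix.mulVec_mulVec, key,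
      Matrix.mulVec_mulVec, Matrix.smul_mul, Matrix.smul_mulVec,
      Matrix.mul_assoc, hDS, ← Matrix.mul_assoc]
end
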